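/- Let Σ = S_{0:k} H_{0:k} S_{0:k}^⊤ + A_k with H_{0:k} and A_k positive definite. Then, with U := H_{0:k}^{1/2}S_{0:k}^⊤Σ^{−1}S_{0:k}H_{0:k}^{1/2} − I and V := H_{0:k}^{1/2}S_{0:k}^⊤Σ^{−1}S_{k:∞}H_{k:∞}^{1/2}, the Woodbury identity yields U² + VV^⊤ = H_{0:k}^{−1/2}(H_{0:k}^{−1} + S_{0:k}^⊤ A_k^{−1} S_{0:k})^{−1} H_{0:k}^{−1/2}. -/

import Mathlib

open Matrix

/-- The positive semidefinite square root of a positive semidefinite matrix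
(Mathlib's definition of December 2024, removed since). -/
noncomputable def Matrix.PosSemidef.sqrt {n 𝕜 : Type*} [Fintype n] [RCLike 𝕜] [PartialOrder 𝕜]
    [DecidableEq n] {A : Matrix n n 𝕜} (hA : A.PosSemidef) : Matrix n n 𝕜 :=
  hA.1.eigenvectorUnitary.1 * diagonal ((↑) ∘ (√·) ∘ hA.1.eigenvalues) *
    (star hA.1.eigenvectorUnitary : Matrix n n 𝕜)

/-!
Put `W := R S₀ᵀ Σ⁻¹ S₀ R`, so that `U = W - 1`. Since `S₁ H₁ S₁ᵀ = Σ - S₀ H₀ S₀ᵀ` and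
`R² = H₀`, one gets `V Vᵀ = W - W²`, hence `U² + V Vᵀ = 1 - W`. On the other side the
Woodbury identity gives `(H₀⁻¹ + S₀ᵀ A⁻¹ S₀)⁻¹ = H₀ - H₀ S₀ᵀ Σ⁻¹ S₀ H₀`, and conjugating by
`R⁻¹` turns this into `1 - W` as well.
-/

namespace Matrix

section RealSqrt

variable {n : Type*} [Fintype n] [DecidableEq n] {A : Matrix n n ℝ}

theorem PosSemidef.sqrt_mul_self (hA : A.PosSemidef) : hA.sqrt * hA.sqrt = A := by
  have hU : (star hA.1.eigenvectorUnitary : Matrix n n ℝ) * hA.1.eigenvectorUnitary.1 = 1 :=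
    Unitary.star_mul_self_of_mem hA.1.eigenvectorUnitary.2
  unfold PosSemidef.sqrt
  simp only [Matrix.mul_assoc]
  rw [← Matrix.mul_assoc (star _ : Matrix n n ℝ) _, hU, Matrix.one_mul,
    ← Matrix.mul_assoc (diagonal _), diagonal_mul_diagonal]
  conv_rhs => rw [hA.1.spectral_theorem, Unitary.conjStarAlgAut_apply, Matrix.mul_assoc]
  congr 3
  funext i
  simp [Real.mul_self_sqrt (hA.eigenvalues_nonneg i)]

theorem PosSemidef.transpose_sqrt (hA : A.PosSemidef) : hA.sqrtᵀ = hA.sqrt := by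
  simp [PosSemidef.sqrt, transpose_mul, star_eq_conjTranspose,
    conjTranspose_eq_transpose_of_trivial, Matrix.mul_assoc]

theorem PosSemidef.sqrt_mul_transpose_sqrt (hA : A.PosSemidef) : hA.sqrt * hA.sqrtᵀ = A := by
  rw [hA.transpose_sqrt, hA.sqrt_mul_self]

theorem PosDef.isUnit_sqrt (hA : A.PosDef) : IsUnit hA.posSemidef.sqrt := by
  have hdet : IsUnit (hA.posSemidef.sqrt.det * hA.posSemidef.sqrt.det) := by
    rw [← det_mul, hA.posSemidef.sqrt_mul_self]
    exact (isUnit_iff_isUnit_det A).1 hA.isUnit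
  exact (isUnit_iff_isUnit_det _).2 (isUnit_of_mul_isUnit_left hdet)

end RealSqrt

section Woodbury

variable {m n α : Type*} [Fintype m] [Fintype n] [DecidableEq m] [DecidableEq n] [CommRing α]

theorem inv_add_mul_inv_mul_eq_sub {H : Matrix m m α} {A : Matrix n n α} (T : Matrix m n α)
    (S : Matrix n m α) (hH : IsUnit H) (hA : IsUnit A) (hB : IsUnit (S * H * T + A)) :
    (H⁻¹ + T * A⁻¹ * S)⁻¹ = H - H * (T * (S * H * T + A)⁻¹ * S) * H := by
  have hH' : IsUnit H.det := (isUnit_iff_isUnit_det H).1 hH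
  have hA' : IsUnit A.det := (isUnit_iff_isUnit_det A).1 hA
  have hB' : IsUnit (A⁻¹⁻¹ + S * H⁻¹⁻¹ * T) := by
    rwa [nonsing_inv_nonsing_inv _ hH', nonsing_inv_nonsing_inv _ hA', add_comm]
  rw [add_mul_mul_inv_eq_sub H⁻¹ T A⁻¹ S (isUnit_nonsing_inv_iff.2 hH)
      (isUnit_nonsing_inv_iff.2 hA) hB',
    nonsing_inv_nonsing_inv _ hH', nonsing_inv_nonsing_inv _ hA', add_comm A]
  simp only [Matrix.mul_assoc]

theorem inv_mul_sub_mul_mul_inv_of_mul_self_eq {R H : Matrix m m α} (hR : IsUnit R)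
    (hRR : R * R = H) (X : Matrix m m α) :
    R⁻¹ * (H - H * X * H) * R⁻¹ = 1 - R * X * R := by
  have hR' : IsUnit R.det := (isUnit_iff_isUnit_det R).1 hR
  have hleft : R⁻¹ * H = R := by rw [← hRR, nonsing_inv_mul_cancel_left _ _ hR']
  have hright : H * R⁻¹ = R := by rw [← hRR, mul_nonsing_inv_cancel_right _ _ hR']
  calc R⁻¹ * (H - H * X * H) * R⁻¹ = R⁻¹ * H * R⁻¹ - (R⁻¹ * H) * X * (H * R⁻¹) := by
        simp only [Matrix.mul_sub, Matrix.sub_mul, Matrix.mul_assoc]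
    _ = 1 - R * X * R := by rw [hleft, hright, mul_nonsing_inv _ hR']

end Woodbury

section HeadBlock

variable {n k₀ k₁ α : Type*} [Fintype n] [Fintype k₀] [Fintype k₁] [DecidableEq n] [CommRing α]
  {S₀ : Matrix n k₀ α} {S₁ : Matrix n k₁ α} {H₀ R : Matrix k₀ k₀ α} {H₁ Q : Matrix k₁ k₁ α}
  {Sig : Matrix n n α}

theorem transpose_nonsing_inv_of_eq_add (hH₀ : H₀ᵀ = H₀) (hH₁ : H₁ᵀ = H₁)
    (hSig : Sig = S₀ * H₀ * S₀ᵀ + S₁ * H₁ * S₁ᵀ) : Sig⁻¹ᵀ = Sig⁻¹ := by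
  rw [transpose_nonsing_inv, hSig]
  simp only [transpose_add, transpose_mul, transpose_transpose, hH₀, hH₁, Matrix.mul_assoc]

theorem mul_transpose_eq_sub_mul_self (hRT : Rᵀ = R) (hR : R * R = H₀) (hQ : Q * Qᵀ = H₁)
    (hSig : Sig = S₀ * H₀ * S₀ᵀ + S₁ * H₁ * S₁ᵀ) (hSigU : IsUnit Sig) :
    (R * S₀ᵀ * Sig⁻¹ * S₁ * Q) * (R * S₀ᵀ * Sig⁻¹ * S₁ * Q)ᵀ =
      R * S₀ᵀ * Sig⁻¹ * S₀ * R - (R * S₀ᵀ * Sig⁻¹ * S₀ * R) * (R * S₀ᵀ * Sig⁻¹ * S₀ * R) := by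
  have hdet : IsUnit Sig.det := (isUnit_iff_isUnit_det Sig).1 hSigU
  have hSigT : Sig⁻¹ᵀ = Sig⁻¹ := transpose_nonsing_inv_of_eq_add
    (by rw [← hR, transpose_mul, hRT]) (by rw [← hQ, transpose_mul, transpose_transpose]) hSig
  calc (R * S₀ᵀ * Sig⁻¹ * S₁ * Q) * (R * S₀ᵀ * Sig⁻¹ * S₁ * Q)ᵀ
      = R * S₀ᵀ * Sig⁻¹ * (S₁ * H₁ * S₁ᵀ) * Sig⁻¹ * S₀ * R := by
        simp only [transpose_mul, transpose_transpose, hRT, hSigT, ← hQ, Matrix.mul_assoc]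
    _ = R * S₀ᵀ * Sig⁻¹ * (Sig - S₀ * H₀ * S₀ᵀ) * Sig⁻¹ * S₀ * R := by
        rw [hSig, add_sub_cancel_left]
    _ = _ := by
        simp only [Matrix.mul_sub, Matrix.sub_mul, ← hR, Matrix.mul_assoc,
          mul_nonsing_inv_cancel_left _ _ hdet]

end HeadBlock

end Matrix

/-- Head-block identity via the Woodbury formula: with
`Σ = S₀H₀S₀^⊤ + A`, `A = S₁H₁S₁^⊤` positive definite and `H₀` positive definite,
the blocks `U = H₀^{1/2}S₀^⊤Σ^{−1}S₀H₀^{1/2} − I` and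
`V = H₀^{1/2}S₀^⊤Σ^{−1}S₁H₁^{1/2}` satisfy
`U² + VV^⊤ = H₀^{−1/2}(H₀^{−1} + S₀^⊤A^{−1}S₀)^{−1}H₀^{−1/2}`. -/
theorem stmt15 (Mdim k₁ k₂ : ℕ)
    (H₀ : Matrix (Fin k₁) (Fin k₁) ℝ) (hH₀ : H₀.PosDef)
    (H₁ : Matrix (Fin k₂) (Fin k₂) ℝ) (hH₁ : H₁.PosSemidef)
    (S₀ : Matrix (Fin Mdim) (Fin k₁) ℝ) (S₁ : Matrix (Fin Mdim) (Fin k₂) ℝ)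
    (hA : (S₁ * H₁ * S₁ᵀ).PosDef) :
    let A := S₁ * H₁ * S₁ᵀ
    let Sig := S₀ * H₀ * S₀ᵀ + A
    let R := hH₀.posSemidef.sqrt
    let U := R * S₀ᵀ * Sig⁻¹ * S₀ * R - 1
    let V := R * S₀ᵀ * Sig⁻¹ * S₁ * hH₁.sqrt
    U * U + V * Vᵀ = R⁻¹ * (H₀⁻¹ + S₀ᵀ * A⁻¹ * S₀)⁻¹ * R⁻¹ := by
  intro A Sig R U V
  set W := R * S₀ᵀ * Sig⁻¹ * S₀ * R
  have hRR : R * R = H₀ := hH₀.posSemidef.sqrt_mul_self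
  have hSig : Sig.PosDef := by
    refine PosDef.posSemidef_add ?_ hA
    simpa [conjTranspose_eq_transpose_of_trivial] using hH₀.posSemidef.mul_mul_conjTranspose_same S₀
  have hVV : V * Vᵀ = W - W * W := mul_transpose_eq_sub_mul_self
    hH₀.posSemidef.transpose_sqrt hRR hH₁.sqrt_mul_transpose_sqrt rfl hSig.isUnit
  have hWoodbury : R⁻¹ * (H₀⁻¹ + S₀ᵀ * A⁻¹ * S₀)⁻¹ * R⁻¹ = 1 - W := by
    rw [inv_add_mul_inv_mul_eq_sub S₀ᵀ S₀ hH₀.isUnit hA.isUnit hSig.isUnit,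
      inv_mul_sub_mul_mul_inv_of_mul_self_eq hH₀.isUnit_sqrt hRR]
    simp only [W, Sig, A, R, Matrix.mul_assoc]
  change (W - 1) * (W - 1) + V * Vᵀ = _
  rw [hVV, hWoodbury]
  noncomm_ring
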